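/- Let A be a bounded linear operator on a complex Hilbert space H and let M be a bounded normal operator on H that commutes with A (AM = MA). Then the norm of the self-commutator of A satisfies ‖A*A − AA*‖ ≤ ‖A + M‖². -/

import Mathlib

/-!
By Fuglede's theorem `A` also commutes with `M*`, and together with the normality of `M` this
makes the self-commutator of `A + M` equal to that of `A`. For any `B` in a C⋆-algebra, `B*B`
and `BB*` both lie between `0` and `‖B‖²`, so their difference lies between `-‖B‖²` and `‖B‖²`,
and hence has norm at most `‖B‖²`.
-/

open ContinuousLinearMap

def selfCommutator {R : Type*} [Ring R] [StarRing R] (a : R) : R :=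
  star a * a - a * star a

lemma selfCommutator_add_of_commute_star {R : Type*} [Ring R] [StarRing R] {a m : R}
    (hm : IsStarNormal m) (ham : Commute a (star m)) :
    selfCommutator (a + m) = selfCommutator a := by
  have hma : Commute (star a) m := by simpa using ham.star_star
  simp only [selfCommutator, star_add, add_mul, mul_add, hm.star_comm_self.eq, hma.eq, ham.eq]
  abel

section CStarAlgebra

variable {A : Type*} [CStarAlgebra A] [PartialOrder A] [StarOrderedRing A]

lemma IsSelfAdjoint.norm_le_of_neg_le_of_le {a : A} (ha : IsSelfAdjoint a) {r : ℝ} (hr : 0 ≤ r)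
    (h_neg : -algebraMap ℝ A r ≤ a) (h_le : a ≤ algebraMap ℝ A r) : ‖a‖ ≤ r := by
  cases subsingleton_or_nontrivial A
  · simpa [Subsingleton.elim a 0] using hr
  have h_ge : ∀ x ∈ spectrum ℝ a, -r ≤ x := by
    rw [← algebraMap_le_iff_le_spectrum ha, map_neg]
    exact h_neg
  rcases CStarAlgebra.norm_or_neg_norm_mem_spectrum ha with h | h
  · exact (le_algebraMap_iff_spectrum_le ha).mp h_le _ h
  · linarith [h_ge _ h]

lemma norm_selfCommutator_le_sq_norm (b : A) : ‖selfCommutator b‖ ≤ ‖b‖ ^ 2 := by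
  have h_sa : IsSelfAdjoint (selfCommutator b) :=
    (IsSelfAdjoint.star_mul_self b).sub (IsSelfAdjoint.mul_star_self b)
  refine h_sa.norm_le_of_neg_le_of_le (by positivity) ?_ ?_
  · rw [neg_le, selfCommutator, neg_sub]
    exact (sub_le_self _ (star_mul_self_nonneg b)).trans
      CStarAlgebra.mul_star_le_algebraMap_norm_sq
  · exact (sub_le_self _ (mul_star_self_nonneg b)).trans
      CStarAlgebra.star_mul_le_algebraMap_norm_sq

end CStarAlgebra

theorem selfCommutator_norm_le_sq_norm_add_normal_commuting
    {H : Type*} [NormedAddCommGroup H] [InnerProductSpace ℂ H] [CompleteSpace H]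
    (A M : H →L[ℂ] H)
    (hM : adjoint M ∘L M = M ∘L adjoint M)
    (hAM : A ∘L M = M ∘L A) :
    ‖adjoint A ∘L A - A ∘L adjoint A‖ ≤ ‖A + M‖ ^ 2 := by
  have hM_normal : IsStarNormal M := ⟨hM⟩
  have hA_comm_star : Commute A (star M) := hM_normal.commute_star_right hAM
  calc ‖adjoint A ∘L A - A ∘L adjoint A‖ = ‖selfCommutator (A + M)‖ := by
        rw [selfCommutator_add_of_commute_star hM_normal hA_comm_star]; rfl
    _ ≤ ‖A + M‖ ^ 2 := norm_selfCommutator_le_sq_norm _
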